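/- Let φ = ⋀_{i=1}^n (ℓ_{i1} ∨ ℓ_{i2} ∨ ℓ_{i3}) be a 3-CNF formula over variables x₁,…,x_m, and let D_φ consist of the defaults (⊤ : x_i / x_i) and (⊤ : ¬x_i / ¬x_i) for 1 ≤ i ≤ m, together with (ℓ̄_{iπ(1)} : ℓ̄_{iπ(2)} / ℓ_{iπ(3)}) for every clause i and every permutation π of {1,2,3}, where ℓ̄ denotes the literal of opposite polarity. Then φ is satisfiable if and only if the default theory ⟨∅, D_φ⟩ has a stable extension. -/

import Mathlib

inductive Form : Type where
  | var : ℕ → Form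
  | app : (n : ℕ) → ((Fin n → Bool) → Bool) → (Fin n → Form) → Form

namespace Form

def eval (σ : ℕ → Bool) : Form → Bool
  | var x => σ x
  | app _ f a => f (fun i => (a i).eval σ)

def tru : Form := app 0 (fun _ => true) (fun i => i.elim0)
def fls : Form := app 0 (fun _ => false) (fun i => i.elim0)
def neg (φ : Form) : Form := app 1 (fun v => !(v 0)) (fun _ => φ)
def conj (φ ψ : Form) : Form := app 2 (fun v => v 0 && v 1) ![φ, ψ]
def disj (φ ψ : Form) : Form := app 2 (fun v => v 0 || v 1) ![φ, ψ]

end Form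

/-- σ satisfies all formulae of A. -/
def Sat (σ : ℕ → Bool) (A : Set Form) : Prop := ∀ φ ∈ A, φ.eval σ = true

/-- Semantic consequence A ⊨ φ. -/
def Entails (A : Set Form) (φ : Form) : Prop := ∀ σ, Sat σ A → φ.eval σ = true

/-- Th(A) = {φ | A ⊨ φ}. -/
def Th (A : Set Form) : Set Form := {φ | Entails A φ}

def Consistent (A : Set Form) : Prop := ∃ σ, Sat σ A

/-- A default rule (α : β / γ). -/
structure Default where
  pre : Form
  just : Form
  con : Form

/-- S contains W, is deductively closed, and closed under defaults applicable w.r.t. E. -/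
def GammaClosed (W : Set Form) (D : Set Default) (E S : Set Form) : Prop :=
  W ⊆ S ∧ Th S = S ∧ ∀ d ∈ D, d.pre ∈ S → Form.neg d.just ∉ E → d.con ∈ S

/-- Γ(E): the smallest set satisfying the three closure conditions. -/
def Gamma (W : Set Form) (D : Set Default) (E : Set Form) : Set Form :=
  ⋂₀ {S | GammaClosed W D E S}

/-- E is a stable extension of ⟨W,D⟩. -/
def Stable (W : Set Form) (D : Set Default) (E : Set Form) : Prop :=
  Gamma W D E = E


def bigConj (l : List Form) : Form := l.foldr Form.conj Form.tru
def bigDisj (l : List Form) : Form := l.foldr Form.disj Form.fls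

/-- The formula corresponding to a literal (polarity, variable). -/
def litForm (l : Bool × ℕ) : Form :=
  if l.1 then Form.var l.2 else Form.neg (Form.var l.2)

/-- The literal of opposite polarity. -/
def oppLit (l : Bool × ℕ) : Bool × ℕ := (!l.1, l.2)

/-- The 3-CNF formula with clauses given by C over variables 0,…,m-1. -/
def cnfForm (n m : ℕ) (C : Fin n → Fin 3 → Bool × Fin m) : Form :=
  bigConj ((List.finRange n).map fun i =>
    bigDisj ((List.finRange 3).map fun j => litForm ((C i j).1, ((C i j).2 : ℕ))))

/-- The set of defaults D_φ constructed from the 3-CNF formula. -/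
def cnfDefaults (n m : ℕ) (C : Fin n → Fin 3 → Bool × Fin m) : Set Default :=
  {d | ∃ i : Fin m, d = ⟨Form.tru, Form.var i, Form.var i⟩} ∪
  {d | ∃ i : Fin m, d = ⟨Form.tru, Form.neg (Form.var i), Form.neg (Form.var i)⟩} ∪
  {d | ∃ (i : Fin n) (π : Equiv.Perm (Fin 3)),
      d = ⟨litForm (oppLit ((C i (π 0)).1, ((C i (π 0)).2 : ℕ))),
           litForm (oppLit ((C i (π 1)).1, ((C i (π 1)).2 : ℕ))),
           litForm ((C i (π 2)).1, ((C i (π 2)).2 : ℕ))⟩} 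

/-!
A satisfying assignment `σ` gives the extension `E = Th {ℓ | ℓ a literal true under σ}`: the literal
defaults `(⊤ : ℓ / ℓ)` put exactly these literals into `Γ(E)`, and every clause default
`(ℓ̄₀ : ℓ̄₁ / ℓ₂)`, read as `¬ℓ₀ ∧ ¬ℓ₁ → ℓ₂`, is true under `σ`, so `E` is closed under it.
Conversely, a stable extension `E` of `⟨∅, D⟩` is consistent; for a model `σ` of `E` the literal
default of every literal true under `σ` fires, so a clause false under `σ` would make its clause
default fire and put a literal false under `σ` into `E`.
-/

namespace Form

variable (σ : ℕ → Bool) (φ ψ : Form)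

@[simp] lemma eval_var (x : ℕ) : (var x).eval σ = σ x := rfl

@[simp] lemma eval_tru : tru.eval σ = true := rfl

@[simp] lemma eval_fls : fls.eval σ = false := rfl

@[simp] lemma eval_neg : (neg φ).eval σ = !φ.eval σ := rfl

@[simp] lemma eval_conj : (conj φ ψ).eval σ = (φ.eval σ && ψ.eval σ) := rfl

@[simp] lemma eval_disj : (disj φ ψ).eval σ = (φ.eval σ || ψ.eval σ) := rfl

end Form

lemma eval_bigConj (σ : ℕ → Bool) (l : List Form) :
    (bigConj l).eval σ = true ↔ ∀ φ ∈ l, φ.eval σ = true := by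
  induction l with
  | nil => simp [bigConj]
  | cons φ l ih => simp [bigConj, ← ih]

lemma eval_bigDisj (σ : ℕ → Bool) (l : List Form) :
    (bigDisj l).eval σ = true ↔ ∃ φ ∈ l, φ.eval σ = true := by
  induction l with
  | nil => simp [bigDisj]
  | cons φ l ih => simp [bigDisj, ← ih]

@[simp] lemma eval_litForm (σ : ℕ → Bool) (l : Bool × ℕ) :
    (litForm l).eval σ = (σ l.2 == l.1) := by
  obtain ⟨_ | _, x⟩ := l <;> simp [litForm]

lemma eval_litForm_oppLit (σ : ℕ → Bool) (l : Bool × ℕ) :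
    (litForm (oppLit l)).eval σ = !(litForm l).eval σ := by
  obtain ⟨_ | _, x⟩ := l <;> simp [oppLit]

lemma eval_cnfForm {n m : ℕ} (C : Fin n → Fin 3 → Bool × Fin m) (σ : ℕ → Bool) :
    (cnfForm n m C).eval σ = true ↔
      ∀ i, ∃ j, (litForm ((C i j).1, ((C i j).2 : ℕ))).eval σ = true := by
  simp [cnfForm, eval_bigConj, eval_bigDisj]

lemma subset_Th (A : Set Form) : A ⊆ Th A := fun _ hφ _ hσ => hσ _ hφ

lemma Th_Th (A : Set Form) : Th (Th A) = Th A :=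
  (subset_Th _).antisymm' fun _ hφ σ hσ => hφ σ fun _ hψ => hψ σ hσ

lemma Th_subset_of_subset {A S : Set Form} (hS : Th S = S) (h : A ⊆ S) : Th A ⊆ S :=
  hS ▸ fun _ hφ σ hσ => hφ σ fun _ hψ => hσ _ (h hψ)

lemma Sat.Th {σ : ℕ → Bool} {A : Set Form} (h : Sat σ A) : Sat σ (Th A) :=
  fun _ hφ => hφ σ h

lemma tru_mem_of_Th_eq {S : Set Form} (hS : Th S = S) : Form.tru ∈ S :=
  hS ▸ fun _ _ => rfl

section DefaultLogic

variable {W E S : Set Form} {D : Set Default}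

lemma gammaClosed_Gamma : GammaClosed W D E (Gamma W D E) := by
  refine ⟨fun _ hφ S hS => hS.1 hφ, ?_,
    fun d hd hpre hjust S hS => hS.2.2 d hd (hpre S hS) hjust⟩
  exact (subset_Th _).antisymm' fun φ hφ S hS =>
    Th_subset_of_subset hS.2.1 (Set.sInter_subset_of_mem hS) hφ

lemma Gamma_subset (hS : GammaClosed W D E S) : Gamma W D E ⊆ S :=
  Set.sInter_subset_of_mem hS

lemma Stable.gammaClosed (hE : Stable W D E) : GammaClosed W D E E := by
  simpa only [show Gamma W D E = E from hE] using gammaClosed_Gamma (W := W) (D := D) (E := E)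

lemma stable_of_gammaClosed (hcl : GammaClosed W D E E) (hsub : E ⊆ Gamma W D E) :
    Stable W D E :=
  (Gamma_subset hcl).antisymm hsub

/-- If the model satisfies `β`, then `¬β` is false in it and so not in `E`. -/
lemma Stable.con_mem {σ : ℕ → Bool} {d : Default} (hE : Stable W D E) (hσ : Sat σ E)
    (hd : d ∈ D) (hpre : d.pre ∈ E) (hjust : d.just.eval σ = true) : d.con ∈ E :=
  hE.gammaClosed.2.2 d hd hpre fun h => by simpa [hjust] using hσ _ h

/-- If `E` were inconsistent it would contain every `¬β`, so no default would fire and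
`E = Γ(E) ⊆ Th W`, which is consistent. -/
lemma Stable.consistent (hW : Consistent W) (hE : Stable W D E) : Consistent E := by
  obtain ⟨σ, hσ⟩ := hW
  by_contra hinc
  have huniv : E = Set.univ := Set.eq_univ_of_forall fun φ =>
    hE.gammaClosed.2.1 ▸ fun τ hτ => absurd ⟨τ, hτ⟩ hinc
  have hThW : GammaClosed W D E (Th W) :=
    ⟨subset_Th W, Th_Th W, fun _ _ _ hjust => absurd (huniv ▸ Set.mem_univ _) hjust⟩
  exact hinc ⟨σ, fun φ hφ => hσ.Th φ (Gamma_subset hThW (hE.symm ▸ hφ))⟩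

end DefaultLogic

/-- `Th (litSet σ m)` is the extension corresponding to the assignment `σ`. -/
def litSet (σ : ℕ → Bool) (m : ℕ) : Set Form :=
  (fun x => litForm (σ x, x)) '' Set.Iio m

def DependsOnVarsBelow (m : ℕ) (φ : Form) : Prop :=
  ∀ σ τ : ℕ → Bool, (∀ x < m, σ x = τ x) → φ.eval σ = φ.eval τ

lemma DependsOnVarsBelow.neg {m : ℕ} {φ : Form} (h : DependsOnVarsBelow m φ) :
    DependsOnVarsBelow m (Form.neg φ) := fun σ τ hστ => by simp [h σ τ hστ]

lemma dependsOnVarsBelow_litForm {m : ℕ} {l : Bool × ℕ} (hl : l.2 < m) :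
    DependsOnVarsBelow m (litForm l) := fun σ τ hστ => by simp [hστ _ hl]

section LitSet

variable {σ : ℕ → Bool} {m : ℕ}

lemma sat_litSet_iff {τ : ℕ → Bool} : Sat τ (litSet σ m) ↔ ∀ x < m, τ x = σ x := by
  simp [Sat, litSet]

lemma mem_Th_litSet_iff {φ : Form} (hφ : DependsOnVarsBelow m φ) :
    φ ∈ Th (litSet σ m) ↔ φ.eval σ = true :=
  ⟨fun h => h σ (sat_litSet_iff.2 fun _ _ => rfl),
    fun h τ hτ => hφ τ σ (sat_litSet_iff.1 hτ) ▸ h⟩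

theorem stable_Th_litSet {D : Set Default}
    (hlit : ∀ x < m, ⟨Form.tru, litForm (σ x, x), litForm (σ x, x)⟩ ∈ D)
    (hdep : ∀ d ∈ D, DependsOnVarsBelow m d.just ∧ DependsOnVarsBelow m d.con)
    (hsat : ∀ d ∈ D, d.pre.eval σ = true → d.just.eval σ = true → d.con.eval σ = true) :
    Stable ∅ D (Th (litSet σ m)) := by
  have hσ : Sat σ (Th (litSet σ m)) := (sat_litSet_iff.2 fun _ _ => rfl).Th
  have hneg {φ : Form} (hφ : DependsOnVarsBelow m φ) (hnot : Form.neg φ ∉ Th (litSet σ m)) :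
      φ.eval σ = true := by
    simpa [mem_Th_litSet_iff hφ.neg] using hnot
  refine stable_of_gammaClosed ⟨Set.empty_subset _, Th_Th _, fun d hd hpre hjust => ?_⟩ ?_
  · exact (mem_Th_litSet_iff (hdep d hd).2).2
      (hsat d hd (hσ _ hpre) (hneg (hdep d hd).1 hjust))
  · refine Th_subset_of_subset gammaClosed_Gamma.2.1 ?_
    rintro _ ⟨x, hx, rfl⟩
    refine gammaClosed_Gamma.2.2 _ (hlit x hx) (tru_mem_of_Th_eq gammaClosed_Gamma.2.1) ?_
    rw [mem_Th_litSet_iff (dependsOnVarsBelow_litForm hx).neg]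
    simp

end LitSet

section CnfDefaults

variable {n m : ℕ} {C : Fin n → Fin 3 → Bool × Fin m}

lemma literalDefault_mem_cnfDefaults (b : Bool) (x : Fin m) :
    ⟨Form.tru, litForm (b, x), litForm (b, x)⟩ ∈ cnfDefaults n m C := by
  cases b
  · exact Or.inl (Or.inr ⟨x, rfl⟩)
  · exact Or.inl (Or.inl ⟨x, rfl⟩)

lemma clauseDefault_mem_cnfDefaults (i : Fin n) :
    ⟨litForm (oppLit ((C i 0).1, (C i 0).2)), litForm (oppLit ((C i 1).1, (C i 1).2)),
      litForm ((C i 2).1, (C i 2).2)⟩ ∈ cnfDefaults n m C :=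
  Or.inr ⟨i, 1, rfl⟩

lemma dependsOnVarsBelow_of_mem_cnfDefaults {d : Default} (hd : d ∈ cnfDefaults n m C) :
    DependsOnVarsBelow m d.just ∧ DependsOnVarsBelow m d.con := by
  rcases hd with (⟨x, rfl⟩ | ⟨x, rfl⟩) | ⟨i, π, rfl⟩
  · exact ⟨dependsOnVarsBelow_litForm (l := (true, x)) x.2,
      dependsOnVarsBelow_litForm (l := (true, x)) x.2⟩
  · exact ⟨dependsOnVarsBelow_litForm (l := (false, x)) x.2,
      dependsOnVarsBelow_litForm (l := (false, x)) x.2⟩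
  · exact ⟨dependsOnVarsBelow_litForm (C i (π 1)).2.2,
      dependsOnVarsBelow_litForm (C i (π 2)).2.2⟩

/-- Read as the implication `¬ℓ₀ ∧ ¬ℓ₁ → ℓ₂`, a clause default `(ℓ̄₀ : ℓ̄₁ / ℓ₂)` is its clause. -/
lemma eval_con_of_mem_cnfDefaults {σ : ℕ → Bool} (hσ : (cnfForm n m C).eval σ = true)
    {d : Default} (hd : d ∈ cnfDefaults n m C) (hpre : d.pre.eval σ = true)
    (hjust : d.just.eval σ = true) : d.con.eval σ = true := by
  rcases hd with (⟨x, rfl⟩ | ⟨x, rfl⟩) | ⟨i, π, rfl⟩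
  · exact hjust
  · exact hjust
  obtain ⟨j, hj⟩ := (eval_cnfForm C σ).1 hσ i
  obtain ⟨k, rfl⟩ := π.surjective j
  simp only [eval_litForm_oppLit, Bool.not_eq_true'] at hpre hjust
  fin_cases k
  · simp_all
  · simp_all
  · exact hj

theorem stable_of_eval_cnfForm {σ : ℕ → Bool} (hσ : (cnfForm n m C).eval σ = true) :
    Stable ∅ (cnfDefaults n m C) (Th (litSet σ m)) :=
  stable_Th_litSet (fun x hx => literalDefault_mem_cnfDefaults (σ x) ⟨x, hx⟩)
    (fun _ => dependsOnVarsBelow_of_mem_cnfDefaults) (fun _ => eval_con_of_mem_cnfDefaults hσ)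

theorem eval_cnfForm_of_stable {E : Set Form} {σ : ℕ → Bool}
    (hE : Stable ∅ (cnfDefaults n m C) E) (hσ : Sat σ E) : (cnfForm n m C).eval σ = true := by
  have htru : Form.tru ∈ E := tru_mem_of_Th_eq hE.gammaClosed.2.1
  have hlit (b : Bool) (x : Fin m) (h : (litForm (b, x)).eval σ = true) : litForm (b, x) ∈ E :=
    hE.con_mem hσ (literalDefault_mem_cnfDefaults b x) htru h
  refine (eval_cnfForm C σ).2 fun i => ?_
  by_contra! hfalse
  simp only [ne_eq, Bool.not_eq_true] at hfalse
  have hopp (j : Fin 3) : litForm (oppLit ((C i j).1, (C i j).2)) ∈ E :=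
    hlit (!(C i j).1) (C i j).2 <|
      (eval_litForm_oppLit σ ((C i j).1, (C i j).2)).trans (by rw [hfalse j]; rfl)
  have hcon := hE.con_mem hσ (clauseDefault_mem_cnfDefaults i) (hopp 0)
    (by rw [eval_litForm_oppLit, hfalse]; rfl)
  simpa [hfalse] using hσ _ hcon

end CnfDefaults

/-- A 3-CNF formula φ is satisfiable iff the default theory ⟨∅, D_φ⟩ has a
stable extension. -/
theorem stmt11 (n m : ℕ) (C : Fin n → Fin 3 → Bool × Fin m) :
    (∃ σ, (cnfForm n m C).eval σ = true) ↔
    ∃ E : Set Form, Stable ∅ (cnfDefaults n m C) E := by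
  constructor
  · rintro ⟨σ, hσ⟩
    exact ⟨_, stable_of_eval_cnfForm hσ⟩
  · rintro ⟨E, hE⟩
    obtain ⟨σ, hσ⟩ := hE.consistent ⟨fun _ => true, fun _ h => h.elim⟩
    exact ⟨σ, eval_cnfForm_of_stable hE hσ⟩
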